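/- For positive reals p t l (1 ≤ t ≤ T, 0 ≤ l ≤ L) and any 1 ≤ s ≤ T, the partial sum of dense rewards ∑_{t=1}^{s} r t (with r t = log (p t 0) − log (∑_{l=0}^{L} c t l) + log (∑_{l=0}^{L} c (t−1) l), c t l = ∏_{k=1}^{t} p k l) equals log ( (∏_{t=1}^{s} p t 0) / ( (1/(L+1)) ∑_{l=0}^{L} ∏_{t=1}^{s} p t l ) ). -/

import Mathlib

/-- Prefix property: the sum of dense rewards over any prefix `1 ≤ s ≤ T` of a
trajectory equals the sPCE integrand of the prefix history. -/
theorem dense_rewards_prefix_sum (T L : ℕ) (p : ℕ → ℕ → ℝ)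
    (hp : ∀ t ∈ Finset.Icc 1 T, ∀ l ≤ L, 0 < p t l)
    (c : ℕ → ℕ → ℝ) (hc : ∀ t, ∀ l, c t l = ∏ k ∈ Finset.Icc 1 t, p k l)
    (r : ℕ → ℝ)
    (hr : ∀ t, r t = Real.log (p t 0)
      - Real.log (∑ l ∈ Finset.range (L + 1), c t l)
      + Real.log (∑ l ∈ Finset.range (L + 1), c (t - 1) l))
    (s : ℕ) (hs1 : 1 ≤ s) (hsT : s ≤ T) :
    ∑ t ∈ Finset.Icc 1 s, r t =
      Real.log ((∏ t ∈ Finset.Icc 1 s, p t 0) /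
        ((1 / (L + 1 : ℝ)) *
          ∑ l ∈ Finset.range (L + 1), ∏ t ∈ Finset.Icc 1 s, p t l)) := by
  set S : ℕ → ℝ := fun t => Real.log (∑ l ∈ Finset.range (L + 1), c t l) with hS
  -- telescoping
  have key : ∀ u, u ≤ T → ∑ t ∈ Finset.Icc 1 u, r t =
      (∑ t ∈ Finset.Icc 1 u, Real.log (p t 0)) - S u + S 0 := by
    intro u hu
    induction u with
    | zero => simp
    | succ n ih =>
      rw [Finset.sum_Icc_succ_top (Nat.one_le_iff_ne_zero.mpr (Nat.succ_ne_zero n)),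
        Finset.sum_Icc_succ_top (Nat.one_le_iff_ne_zero.mpr (Nat.succ_ne_zero n)),
        ih (Nat.le_of_succ_le hu), hr (n+1)]
      simp [hS]
      ring
  rw [key s hsT]
  -- positivity of p on the prefix
  have hpos : ∀ t ∈ Finset.Icc 1 s, ∀ l ≤ L, 0 < p t l := by
    intro t ht l hl
    exact hp t (Finset.mem_Icc.mpr ⟨(Finset.mem_Icc.mp ht).1,
      le_trans (Finset.mem_Icc.mp ht).2 hsT⟩) l hl
  have hprodpos : ∀ l ≤ L, 0 < ∏ t ∈ Finset.Icc 1 s, p t l := by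
    intro l hl
    exact Finset.prod_pos (fun t ht => hpos t ht l hl)
  have hsumpos : 0 < ∑ l ∈ Finset.range (L + 1), ∏ t ∈ Finset.Icc 1 s, p t l := by
    apply Finset.sum_pos
    · intro l hl
      exact hprodpos l (Nat.lt_succ_iff.mp (Finset.mem_range.mp hl))
    · exact ⟨0, Finset.mem_range.mpr (Nat.succ_pos L)⟩
  have hL1 : (0:ℝ) < (L:ℝ) + 1 := by positivity
  have hS0 : S 0 = Real.log ((L:ℝ) + 1) := by
    simp [hS, hc]
  have hSs : S s = Real.log (∑ l ∈ Finset.range (L + 1), ∏ t ∈ Finset.Icc 1 s, p t l) := by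
    simp only [hS]
    congr 1
    exact Finset.sum_congr rfl (fun l _ => hc s l)
  rw [hS0, hSs, Real.log_div (ne_of_gt (hprodpos 0 (Nat.zero_le L))) (mul_ne_zero (by positivity) (ne_of_gt hsumpos)),
    Real.log_mul (by positivity) (ne_of_gt hsumpos),
    Real.log_prod (fun t ht => ne_of_gt (hpos t ht 0 (Nat.zero_le L))),
    one_div, Real.log_inv]
  ring
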